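/- Let k ≥ 1 and let g_1, …, g_k be the free generators of the free group F_k, with λ the left regular representation on ℓ²(F_k). For every matrix A = (a_{ij}) ∈ M_k(ℂ) with Tr A = 0, one has k^{-1} ‖Σ_{i,j=1}^k a_{ij} λ(g_i g_j^{-1})‖ ≤ (3/k) ‖A‖₂, where ‖A‖₂ = (Σ_{i,j} |a_{ij}|²)^{1/2} is the Frobenius norm and the norm on the left is the operator norm on ℓ²(F_k). -/

import Mathlib

/-!
Write `λ(gᵢ gⱼ⁻¹) ξ = λ(gᵢ) λ(gⱼ⁻¹) ξ` and split `ξ` according to whether a reduced word starts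
with `gⱼ`. On the words that do not, `λ(gⱼ⁻¹)` prepends the letter `gⱼ⁻¹` (`prependPart`); on
those that do, it cancels `gⱼ` (`cancelPart`), and since these sets are disjoint the vectors
`cancelPart ξ j` have total square norm at most `‖ξ‖²`. Splitting `cancelPart ξ j` once more
according to whether a word starts with `gᵢ⁻¹` writes the operator applied to `ξ` as three sums.
In the first two, `λ(gᵢ)` is applied to vectors supported off the words starting with `gᵢ⁻¹`, so
the `i`-th summand lives on words starting with `gᵢ`: the summands are orthogonal, and each is
bounded by the `i`-th row norm of the matrix times `‖ξ‖`, by orthogonality in `j` for the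
prepended parts and by Cauchy–Schwarz for the cancelled ones. The third sum is bounded by
Cauchy–Schwarz over all pairs `(i, j)`. Each sum contributes at most `‖A‖₂ ‖ξ‖`. The prepended
parts need `aᵢᵢ = 0`; a traceless matrix may be replaced by its off-diagonal part, because
`λ(gᵢ gᵢ⁻¹) = 1`.
-/

open scoped ENNReal

noncomputable section

variable {α : Type*}

private theorem lpShift_mem (e : α ≃ α) (ξ : lp (fun _ : α => ℂ) 2) :
    Memℓp (fun x => ξ (e x)) (2 : ℝ≥0∞) := by
  have hp : 0 < (2 : ℝ≥0∞).toReal := by norm_num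
  refine (memℓp_gen_iff hp).2 ?_
  exact e.summable_iff.2 ((memℓp_gen_iff hp).1 (lp.memℓp ξ))

/-- Composition with an index equivalence, as a continuous linear map on `ℓ²`. -/
def lpShift (e : α ≃ α) :
    lp (fun _ : α => ℂ) 2 →L[ℂ] lp (fun _ : α => ℂ) 2 :=
  LinearMap.mkContinuous
    { toFun := fun ξ => (⟨fun x => ξ (e x), lpShift_mem e ξ⟩ : lp (fun _ : α => ℂ) 2)
      map_add' := fun ξ η => lp.ext <| funext fun x => by
        simp only [lp.coeFn_add, Pi.add_apply]
      map_smul' := fun c ξ => lp.ext <| funext fun x => by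
        simp only [lp.coeFn_smul, Pi.smul_apply, RingHom.id_apply] } 1 <| by
    intro ξ
    have hp : 0 < (2 : ℝ≥0∞).toReal := by norm_num
    have : ‖(⟨fun x => ξ (e x), lpShift_mem e ξ⟩ : lp (fun _ : α => ℂ) 2)‖ = ‖ξ‖ := by
      rw [lp.norm_eq_tsum_rpow hp, lp.norm_eq_tsum_rpow hp]
      congr 1
      exact e.tsum_eq fun x => ‖ξ x‖ ^ (2 : ℝ≥0∞).toReal
    simpa using this.le

/-- The left regular representation of a group `G` on `ℓ²(G)`:
`(lam g ξ) x = ξ (g⁻¹ * x)`. -/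
def lam {G : Type*} [Group G] (g : G) :
    lp (fun _ : G => ℂ) 2 →L[ℂ] lp (fun _ : G => ℂ) 2 :=
  lpShift (Equiv.mulLeft g⁻¹)

open Function
open scoped InnerProductSpace Pointwise

namespace lp

section Indicator

variable {γ E : Type*} [NormedAddCommGroup E] {p : ℝ≥0∞}

def indicator (s : Set γ) (f : lp (fun _ : γ => E) p) : lp (fun _ : γ => E) p :=
  ⟨s.indicator f, (lp.memℓp f).mono' fun _ => norm_indicator_le_norm_self _ _⟩

@[simp]
theorem coeFn_indicator (s : Set γ) (f : lp (fun _ : γ => E) p) :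
    ⇑(indicator s f) = s.indicator f :=
  rfl

theorem support_indicator_subset (s : Set γ) (f : lp (fun _ : γ => E) p) :
    support (indicator s f) ⊆ s :=
  Set.support_indicator_subset

theorem indicator_add_indicator_compl (s : Set γ) (f : lp (fun _ : γ => E) p) :
    indicator s f + indicator sᶜ f = f :=
  lp.ext (s.indicator_self_add_compl f)

theorem norm_indicator_le (hp : p ≠ 0) (s : Set γ) (f : lp (fun _ : γ => E) p) :
    ‖indicator s f‖ ≤ ‖f‖ :=
  lp.norm_mono hp fun _ => norm_indicator_le_norm_self _ _

theorem support_sum_subset {ι : Type*} (t : Finset ι) (v : ι → lp (fun _ : γ => E) p) :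
    support (⇑(∑ i ∈ t, v i)) ⊆ ⋃ i ∈ t, support (v i) := by
  rw [lp.coeFn_sum, Finset.sum_fn]
  exact Finset.support_sum t fun i => ⇑(v i)

end Indicator

section Orthogonality

variable {γ 𝕜 : Type*} [RCLike 𝕜]

theorem inner_eq_zero_of_disjoint_support {f g : lp (fun _ : γ => 𝕜) 2}
    (h : Disjoint (support f) (support g)) : ⟪f, g⟫_𝕜 = 0 := by
  have hpt (x : γ) : ⟪f x, g x⟫_𝕜 = 0 := by
    by_cases hf : f x = 0
    · rw [hf, inner_zero_left]
    · rw [notMem_support.1 (Set.disjoint_left.1 h hf), inner_zero_right]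
  simp only [lp.inner_eq_tsum, hpt, tsum_zero]

theorem norm_sum_sq_of_pairwiseDisjoint {ι : Type*} (t : Finset ι)
    (v : ι → lp (fun _ : γ => 𝕜) 2) (h : (t : Set ι).PairwiseDisjoint fun i => support (v i)) :
    ‖∑ i ∈ t, v i‖ ^ 2 = ∑ i ∈ t, ‖v i‖ ^ 2 := by
  classical
  induction t using Finset.induction_on with
  | empty => simp
  | insert a t ha ih =>
    rw [Finset.coe_insert, Set.pairwiseDisjoint_insert] at h
    have horth : ⟪v a, ∑ i ∈ t, v i⟫_𝕜 = 0 :=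
      inner_eq_zero_of_disjoint_support <| Set.disjoint_of_subset_right (support_sum_subset t v) <|
        Set.disjoint_iUnion₂_right.2 fun i hi => h.2 i hi (by rintro rfl; exact ha hi)
    rw [Finset.sum_insert ha, Finset.sum_insert ha, ← ih h.1, sq, sq, sq,
      norm_add_sq_eq_norm_sq_add_norm_sq_of_inner_eq_zero _ _ horth]

theorem support_sum_smul_subset {ι : Type*} {t : Finset ι} {c : ι → 𝕜}
    {v : ι → lp (fun _ : γ => 𝕜) 2} {s : Set γ} (h : ∀ i ∈ t, c i ≠ 0 → support (v i) ⊆ s) :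
    support (⇑(∑ i ∈ t, c i • v i)) ⊆ s := by
  refine (support_sum_subset t _).trans (Set.iUnion₂_subset fun i hi => ?_)
  by_cases hc : c i = 0
  · rw [hc, zero_smul, lp.coeFn_zero, support_zero]
    exact Set.empty_subset s
  · rw [lp.coeFn_smul]
    exact (support_const_smul_subset (c i) _).trans (h i hi hc)

theorem sum_norm_indicator_sq_le {ι : Type*} (t : Finset ι) (s : ι → Set γ)
    (hs : (t : Set ι).PairwiseDisjoint s) (f : lp (fun _ : γ => 𝕜) 2) :
    ∑ i ∈ t, ‖indicator (s i) f‖ ^ 2 ≤ ‖f‖ ^ 2 := by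
  rw [← norm_sum_sq_of_pairwiseDisjoint t _
    (hs.mono fun i => support_indicator_subset (s i) f)]
  have hsum : ∑ i ∈ t, indicator (s i) f = indicator (⋃ i ∈ t, s i) f := by
    ext x
    rw [lp.coeFn_sum, Finset.sum_apply, coeFn_indicator, Finset.indicator_biUnion_apply t s hs]
    rfl
  rw [hsum]
  gcongr
  exact norm_indicator_le two_ne_zero _ f

end Orthogonality

end lp

theorem norm_sum_smul_le {ι 𝕜 E : Type*} [SeminormedRing 𝕜] [SeminormedAddCommGroup E]
    [Module 𝕜 E] [IsBoundedSMul 𝕜 E] (t : Finset ι) (c : ι → 𝕜) (v : ι → E) :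
    ‖∑ i ∈ t, c i • v i‖ ≤ √(∑ i ∈ t, ‖c i‖ ^ 2) * √(∑ i ∈ t, ‖v i‖ ^ 2) :=
  (norm_sum_le _ _).trans <| (Finset.sum_le_sum fun i _ => norm_smul_le (c i) (v i)).trans <|
    Real.sum_mul_le_sqrt_mul_sqrt t _ _

namespace FreeGroup

variable {β : Type*} [DecidableEq β]

theorem pairwiseDisjoint_startsWith (t : Set β) (b : Bool) :
    t.PairwiseDisjoint fun j => startsWith (j, b) :=
  fun _ _ _ _ hij => startsWith.disjoint_iff_ne.2 fun h => hij (congrArg Prod.fst h)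

theorem of_smul_compl_startsWith_subset (i : β) :
    of i • (startsWith (i, false))ᶜ ⊆ startsWith (i, true) := by
  rintro _ ⟨x, hx, rfl⟩
  exact startsWith_mk_mul (w := (i, true)) x hx

theorem inv_of_smul_compl_startsWith_subset (j : β) :
    (of j)⁻¹ • (startsWith (j, true))ᶜ ⊆ startsWith (j, false) := by
  rintro _ ⟨x, hx, rfl⟩
  exact startsWith_mk_mul (w := (j, false)) x hx

end FreeGroup

section RegularRepresentation

variable {G : Type*} [Group G]

theorem lam_apply (g : G) (ξ : lp (fun _ : G => ℂ) 2) (x : G) :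
    lam g ξ x = ξ (g⁻¹ * x) :=
  rfl

theorem norm_lam (g : G) (ξ : lp (fun _ : G => ℂ) 2) : ‖lam g ξ‖ = ‖ξ‖ := by
  have hp : 0 < (2 : ℝ≥0∞).toReal := by norm_num
  rw [lp.norm_eq_tsum_rpow hp, lp.norm_eq_tsum_rpow hp]
  congr 1
  exact (Equiv.mulLeft g⁻¹).tsum_eq fun x => ‖ξ x‖ ^ (2 : ℝ≥0∞).toReal

theorem lam_mul (g h : G) (ξ : lp (fun _ : G => ℂ) 2) : lam (g * h) ξ = lam g (lam h ξ) :=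
  lp.ext <| funext fun x => by rw [lam_apply, lam_apply, lam_apply, mul_inv_rev, mul_assoc]

theorem support_lam (g : G) (ξ : lp (fun _ : G => ℂ) 2) :
    support (lam g ξ) = g • support ξ := by
  ext x
  rw [Set.mem_smul_set_iff_inv_smul_mem, mem_support, mem_support, lam_apply, smul_eq_mul]

theorem support_lam_subset {g : G} {ξ : lp (fun _ : G => ℂ) 2} {s : Set G}
    (h : support ξ ⊆ s) : support (lam g ξ) ⊆ g • s :=
  (support_lam g ξ).trans_subset (Set.smul_set_mono h)

end RegularRepresentation

theorem le_sqrt_mul_of_sq_le {x y S : ℝ} (hy : 0 ≤ y) (h : x ^ 2 ≤ S * y ^ 2) : x ≤ √S * y := by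
  rw [← Real.sqrt_sq hy, ← Real.sqrt_mul' S (sq_nonneg y)]
  exact Real.le_sqrt_of_sq_le h

theorem sum_smul_lam_eq_of_trace_eq_zero {β G : Type*} [Fintype β] [DecidableEq β] [Group G]
    (u : β → G) (A : Matrix β β ℂ) (hA : A.trace = 0) :
    ∑ i, ∑ j, A i j • lam (u i * (u j)⁻¹) =
      ∑ i, ∑ j, (if i = j then 0 else A i j) • lam (u i * (u j)⁻¹) := by
  have hsplit (i j : β) : A i j • lam (u i * (u j)⁻¹) =
      (if i = j then 0 else A i j) • lam (u i * (u j)⁻¹) + if i = j then A i i • lam 1 else 0 := by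
    split_ifs with h
    · subst h; simp
    · simp
  simp only [hsplit, Finset.sum_add_distrib, Finset.sum_ite_eq, Finset.mem_univ, if_true,
    ← Finset.sum_smul]
  rw [show ∑ i, A i i = A.trace from rfl, hA, zero_smul, add_zero]

namespace FreeGroup

variable {β : Type*} [DecidableEq β] (ξ : lp (fun _ : FreeGroup β => ℂ) 2)

def cancelPart (j : β) : lp (fun _ : FreeGroup β => ℂ) 2 :=
  lam (of j)⁻¹ (lp.indicator (startsWith (j, true)) ξ)

def prependPart (j : β) : lp (fun _ : FreeGroup β => ℂ) 2 :=
  lam (of j)⁻¹ (lp.indicator (startsWith (j, true))ᶜ ξ)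

theorem lam_inv_of_eq_cancelPart_add_prependPart (j : β) :
    lam (of j)⁻¹ ξ = cancelPart ξ j + prependPart ξ j := by
  rw [cancelPart, prependPart, ← map_add, lp.indicator_add_indicator_compl]

theorem support_prependPart_subset (j : β) : support (prependPart ξ j) ⊆ startsWith (j, false) :=
  (support_lam_subset (lp.support_indicator_subset _ ξ)).trans
    (inv_of_smul_compl_startsWith_subset j)

theorem norm_prependPart_le (j : β) : ‖prependPart ξ j‖ ≤ ‖ξ‖ := by
  rw [prependPart, norm_lam]
  exact lp.norm_indicator_le two_ne_zero _ ξ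

theorem sum_norm_cancelPart_sq_le [Fintype β] : ∑ j, ‖cancelPart ξ j‖ ^ 2 ≤ ‖ξ‖ ^ 2 := by
  simp only [cancelPart, norm_lam]
  exact lp.sum_norm_indicator_sq_le _ _ (pairwiseDisjoint_startsWith _ true) ξ

theorem norm_sum_lam_of_le_sqrt_mul [Fintype β] (B : Matrix β β ℂ)
    (v : β → lp (fun _ : FreeGroup β => ℂ) 2) (hv : ∀ i, support (v i) ⊆ (startsWith (i, false))ᶜ)
    (hB : ∀ i, ‖v i‖ ≤ √(∑ j, ‖B i j‖ ^ 2) * ‖ξ‖) :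
    ‖∑ i, lam (of i) (v i)‖ ≤ √(∑ i, ∑ j, ‖B i j‖ ^ 2) * ‖ξ‖ := by
  refine le_sqrt_mul_of_sq_le (norm_nonneg ξ) ?_
  have hdisj : (↑(Finset.univ : Finset β) : Set β).PairwiseDisjoint
      fun i => support (lam (of i) (v i)) :=
    (pairwiseDisjoint_startsWith _ true).mono fun i =>
      (support_lam_subset (hv i)).trans (of_smul_compl_startsWith_subset i)
  rw [lp.norm_sum_sq_of_pairwiseDisjoint _ _ hdisj, Finset.sum_mul]
  refine Finset.sum_le_sum fun i _ => ?_
  rw [norm_lam]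
  calc ‖v i‖ ^ 2 ≤ (√(∑ j, ‖B i j‖ ^ 2) * ‖ξ‖) ^ 2 := by gcongr; exact hB i
    _ = (∑ j, ‖B i j‖ ^ 2) * ‖ξ‖ ^ 2 := by rw [mul_pow, Real.sq_sqrt (by positivity)]

theorem norm_sum_smul_prependPart_le [Fintype β] (B : Matrix β β ℂ) (i : β) :
    ‖∑ j, B i j • prependPart ξ j‖ ≤ √(∑ j, ‖B i j‖ ^ 2) * ‖ξ‖ := by
  refine le_sqrt_mul_of_sq_le (norm_nonneg ξ) ?_
  have hdisj : (↑(Finset.univ : Finset β) : Set β).PairwiseDisjoint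
      fun j => support (B i j • prependPart ξ j) :=
    (pairwiseDisjoint_startsWith _ false).mono fun j => by
      rw [lp.coeFn_smul]
      exact (support_const_smul_subset _ _).trans (support_prependPart_subset ξ j)
  rw [lp.norm_sum_sq_of_pairwiseDisjoint _ _ hdisj, Finset.sum_mul]
  gcongr with j
  rw [norm_smul, mul_pow]
  gcongr
  exact norm_prependPart_le ξ j

theorem norm_sum_smul_indicator_cancelPart_le [Fintype β] (B : Matrix β β ℂ) (i : β)
    (s : Set (FreeGroup β)) :
    ‖∑ j, B i j • lp.indicator s (cancelPart ξ j)‖ ≤ √(∑ j, ‖B i j‖ ^ 2) * ‖ξ‖ := by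
  refine (norm_sum_smul_le _ _ _).trans (mul_le_mul_of_nonneg_left ?_ (Real.sqrt_nonneg _))
  refine (Real.sqrt_le_sqrt ?_).trans_eq (Real.sqrt_sq (norm_nonneg ξ))
  calc ∑ j, ‖lp.indicator s (cancelPart ξ j)‖ ^ 2 ≤ ∑ j, ‖cancelPart ξ j‖ ^ 2 := by
        gcongr with j
        exact lp.norm_indicator_le two_ne_zero s _
    _ ≤ ‖ξ‖ ^ 2 := sum_norm_cancelPart_sq_le ξ

theorem norm_sum_smul_lam_indicator_cancelPart_le [Fintype β] (B : Matrix β β ℂ) :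
    ‖∑ i, ∑ j, B i j • lam (of i) (lp.indicator (startsWith (i, false)) (cancelPart ξ j))‖ ≤
      √(∑ i, ∑ j, ‖B i j‖ ^ 2) * ‖ξ‖ := by
  rw [← Fintype.sum_prod_type']
  refine (norm_sum_smul_le _ _ _).trans ?_
  rw [Fintype.sum_prod_type' fun i j => ‖B i j‖ ^ 2]
  refine mul_le_mul_of_nonneg_left ?_ (Real.sqrt_nonneg _)
  refine (Real.sqrt_le_sqrt ?_).trans_eq (Real.sqrt_sq (norm_nonneg ξ))
  simp only [norm_lam]
  rw [Fintype.sum_prod_type'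
    fun i j => ‖lp.indicator (startsWith (i, false)) (cancelPart ξ j)‖ ^ 2, Finset.sum_comm]
  calc ∑ j, ∑ i, ‖lp.indicator (startsWith (i, false)) (cancelPart ξ j)‖ ^ 2
      ≤ ∑ j, ‖cancelPart ξ j‖ ^ 2 := by
        gcongr with j
        exact lp.sum_norm_indicator_sq_le _ _ (pairwiseDisjoint_startsWith _ false) _
    _ ≤ ‖ξ‖ ^ 2 := sum_norm_cancelPart_sq_le ξ

theorem sum_smul_lam_apply [Fintype β] (B : Matrix β β ℂ) :
    (∑ i, ∑ j, B i j • lam (of i * (of j)⁻¹)) ξ =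
      ∑ i, lam (of i) (∑ j, B i j • prependPart ξ j) +
      ∑ i, lam (of i) (∑ j, B i j • lp.indicator (startsWith (i, false))ᶜ (cancelPart ξ j)) +
      ∑ i, ∑ j, B i j • lam (of i) (lp.indicator (startsWith (i, false)) (cancelPart ξ j)) := by
  have hterm (i j : β) : lam (of i * (of j)⁻¹) ξ =
      lam (of i) (prependPart ξ j) +
      lam (of i) (lp.indicator (startsWith (i, false))ᶜ (cancelPart ξ j)) +
      lam (of i) (lp.indicator (startsWith (i, false)) (cancelPart ξ j)) := by
    conv_lhs => rw [lam_mul, lam_inv_of_eq_cancelPart_add_prependPart,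
      ← lp.indicator_add_indicator_compl (startsWith (i, false))ᶜ (cancelPart ξ j), compl_compl]
    simp only [map_add]
    abel
  simp only [sum_apply, FunLike.coe_smul, Pi.smul_apply, hterm,
    map_sum, map_smul, smul_add, Finset.sum_add_distrib]

theorem norm_sum_smul_lam_le [Fintype β] (B : Matrix β β ℂ) (hB : ∀ i, B i i = 0) :
    ‖∑ i, ∑ j, B i j • lam (of i * (of j)⁻¹)‖ ≤ 3 * √(∑ i, ∑ j, ‖B i j‖ ^ 2) := by
  refine ContinuousLinearMap.opNorm_le_bound _ (by positivity) fun ξ => ?_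
  -- For `j = i` the letter `g_i⁻¹` prepended by `λ(g_i⁻¹)` would cancel against `λ(g_i)`.
  have hprepend (i : β) : support ⇑(∑ j, B i j • prependPart ξ j) ⊆ (startsWith (i, false))ᶜ :=
    lp.support_sum_smul_subset fun j _ hBj =>
      (support_prependPart_subset ξ j).trans <| Set.subset_compl_iff_disjoint_right.2 <|
        startsWith.disjoint_iff_ne.2 fun h => by
          obtain rfl : j = i := congrArg Prod.fst h
          exact hBj (hB j)
  have hcancel (i : β) : support ⇑(∑ j, B i j • lp.indicator (startsWith (i, false))ᶜ
      (cancelPart ξ j)) ⊆ (startsWith (i, false))ᶜ :=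
    lp.support_sum_smul_subset fun j _ _ => lp.support_indicator_subset _ _
  rw [sum_smul_lam_apply]
  calc _ ≤ _ := norm_add₃_le
    _ ≤ √(∑ i, ∑ j, ‖B i j‖ ^ 2) * ‖ξ‖ + √(∑ i, ∑ j, ‖B i j‖ ^ 2) * ‖ξ‖ +
        √(∑ i, ∑ j, ‖B i j‖ ^ 2) * ‖ξ‖ := by
      gcongr
      · exact norm_sum_lam_of_le_sqrt_mul ξ B _ hprepend (norm_sum_smul_prependPart_le ξ B)
      · exact norm_sum_lam_of_le_sqrt_mul ξ B _ hcancel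
          fun i => norm_sum_smul_indicator_cancelPart_le ξ B i _
      · exact norm_sum_smul_lam_indicator_cancelPart_le ξ B
    _ = 3 * √(∑ i, ∑ j, ‖B i j‖ ^ 2) * ‖ξ‖ := by ring

end FreeGroup

theorem haagerup_bound_traceless_general {k : ℕ}
    (A : Matrix (Fin k) (Fin k) ℂ) (hA : A.trace = 0) :
    (k : ℝ)⁻¹ * ‖∑ i : Fin k, ∑ j : Fin k,
        A i j • lam (FreeGroup.of i * (FreeGroup.of j)⁻¹)‖ ≤
      (3 / k) * Real.sqrt (∑ i : Fin k, ∑ j : Fin k, ‖A i j‖ ^ 2) := by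
  have hnorm : ‖∑ i : Fin k, ∑ j : Fin k, A i j • lam (FreeGroup.of i * (FreeGroup.of j)⁻¹)‖ ≤
      3 * √(∑ i : Fin k, ∑ j : Fin k, ‖A i j‖ ^ 2) := by
    rw [sum_smul_lam_eq_of_trace_eq_zero _ A hA]
    refine (FreeGroup.norm_sum_smul_lam_le (fun i j => if i = j then 0 else A i j)
      fun i => if_pos rfl).trans ?_
    gcongr with i _ j _
    split_ifs <;> simp
  calc (k : ℝ)⁻¹ * _ ≤ (k : ℝ)⁻¹ * (3 * √(∑ i : Fin k, ∑ j : Fin k, ‖A i j‖ ^ 2)) := by gcongr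
    _ = _ := by ring

/-- For any traceless matrix `A ∈ M_k(ℂ)`, the operator norm of
`k⁻¹ ∑_{i,j} a_{ij} λ(gᵢ gⱼ⁻¹)` (where `g₁, …, g_k` are the free generators of `F_k`
and `λ` is the left regular representation on `ℓ²(F_k)`) is bounded by
`(3/k) ‖A‖₂`, where `‖A‖₂` is the Frobenius norm. -/
theorem haagerup_bound_traceless {k : ℕ} (hk : 1 ≤ k)
    (A : Matrix (Fin k) (Fin k) ℂ) (hA : A.trace = 0) :
    (k : ℝ)⁻¹ * ‖∑ i : Fin k, ∑ j : Fin k,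
        A i j • lam (FreeGroup.of i * (FreeGroup.of j)⁻¹)‖ ≤
      (3 / k) * Real.sqrt (∑ i : Fin k, ∑ j : Fin k, ‖A i j‖ ^ 2) :=
  haagerup_bound_traceless_general A hA
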